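/- Let R¹, R², Y be independent random variables with R¹ ~ InverseBeta(μ-λ, β), R² + 1 ~ InverseBeta(λ, β+μ-λ), Y ~ InverseBeta(μ, β), where μ > λ > 0 and β > 0. Then (Y + (Y-1)·R¹/R², Y·R²/R¹ + (Y-1)) has the same distribution as (R¹, R²). (Invariance of the inverse-beta model under T^{h,Y} with h(y) = y-1.) -/

import Mathlib

open MeasureTheory ProbabilityTheory

/-- The Gamma(a, b) distribution, with density `Γ(a)⁻¹ bᵃ x^{a-1} e^{-bx}` on `(0,∞)`. -/
noncomputable def gammaDist (a b : ℝ) : Measure ℝ :=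
  volume.withDensity fun x => ENNReal.ofReal
    (if 0 < x then (Real.Gamma a)⁻¹ * b ^ a * x ^ (a - 1) * Real.exp (-(b * x)) else 0)

/-- The Beta(a, b) distribution, with density
`(Γ(a+b)/(Γ(a)Γ(b))) x^{a-1} (1-x)^{b-1}` on `(0,1)`. -/
noncomputable def betaDist (a b : ℝ) : Measure ℝ :=
  volume.withDensity fun x => ENNReal.ofReal
    (if 0 < x ∧ x < 1 then
      (Real.Gamma (a + b) / (Real.Gamma a * Real.Gamma b)) * x ^ (a - 1) * (1 - x) ^ (b - 1)
    else 0)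


/-! In the coordinates `x = 1/R¹`, `y = 1/(R² + 1)`, `z = 1/Y` the triple has law
`Beta(a₁, β) ⊗ Beta(a₂, a₁ + β) ⊗ Beta(a₁ + a₂, β)` on the unit cube, where `a₁ = μ - λ`, `a₂ = λ`.
With `E = 1 - (1 - x)(1 - y)` and `D = x(1 - y) + y(1 - z)` put `φ(x, y, z) = (xz(1 - y)/D, yz/E, E)`;
then `T^{h,Y}(R¹, R²) = (1/φ₁, 1/φ₂ - 1)`. The map `φ` is an involution of the cube with Jacobian
determinant `-z(1 - y)/D`, and since `1 - φ₁ = (1 - z)E/D`, `1 - φ₂ = D/E`,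
`1 - φ₃ = (1 - x)(1 - y)`, the change of variables formula shows that `φ` preserves the product
beta density. Hence `T^{h,Y}(R¹, R²)` has the law of `(1/x, 1/y - 1) = (R¹, R²)`. -/

open Set
open scoped ENNReal

lemma map_restrict_withDensity_eq_self {E : Type*} [NormedAddCommGroup E] [NormedSpace ℝ E]
    [FiniteDimensional ℝ E] [MeasurableSpace E] [BorelSpace E] (μ : Measure E)
    [μ.IsAddHaarMeasure] {f : E → E} {f' : E → E →L[ℝ] E} {s : Set E} {ρ : E → ℝ≥0∞}
    (hs : MeasurableSet s) (hf' : ∀ x ∈ s, HasFDerivWithinAt f (f' x) s x)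
    (hf : BijOn f s s) (hfm : Measurable f)
    (hρ : ∀ x ∈ s, ENNReal.ofReal |(f' x).det| * ρ (f x) = ρ x) :
    ((μ.restrict s).withDensity ρ).map f = (μ.restrict s).withDensity ρ := by
  ext A hA
  have hsA : MeasurableSet (s ∩ f ⁻¹' A) := hs.inter (hfm hA)
  have himage : f '' (s ∩ f ⁻¹' A) = A ∩ s := by
    rw [image_inter_preimage, hf.image_eq, inter_comm]
  rw [Measure.map_apply hfm hA, withDensity_apply _ (hfm hA), withDensity_apply _ hA,
    Measure.restrict_restrict (hfm hA), Measure.restrict_restrict hA, ← himage,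
    lintegral_image_eq_lintegral_abs_det_fderiv_mul μ hsA
      (fun x hx => (hf' x hx.1).mono inter_subset_left) (hf.injOn.mono inter_subset_left),
    inter_comm]
  exact setLIntegral_congr_fun hsA fun x hx => (hρ x hx.1).symm

lemma ProbabilityTheory.iIndepFun.map_prodMk_prodMk_eq_prod {Ω β : Type*} [MeasurableSpace Ω]
    [MeasurableSpace β] {μ : Measure Ω} [IsProbabilityMeasure μ] {X₁ X₂ X₃ : Ω → β}
    (h : iIndepFun ![X₁, X₂, X₃] μ)
    (h₁ : Measurable X₁) (h₂ : Measurable X₂) (h₃ : Measurable X₃) :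
    μ.map (fun ω => (X₁ ω, X₂ ω, X₃ ω)) = (μ.map X₁).prod ((μ.map X₂).prod (μ.map X₃)) := by
  have hmeas : ∀ i, Measurable (![X₁, X₂, X₃] i) := by
    intro i; fin_cases i <;> assumption
  have h23 : IndepFun X₂ X₃ μ := by
    simpa using h.indepFun (show (1 : Fin 3) ≠ 2 by decide)
  have h1 : IndepFun X₁ (fun ω => (X₂ ω, X₃ ω)) μ := by
    simpa using (h.indepFun_prodMk hmeas 1 2 0 (by decide) (by decide)).symm
  rw [(indepFun_iff_map_prod_eq_prod_map_map h₁.aemeasurable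
      (h₂.prodMk h₃).aemeasurable).1 h1,
    (indepFun_iff_map_prod_eq_prod_map_map h₂.aemeasurable h₃.aemeasurable).1 h23]

lemma betaDist_eq_betaMeasure (a b : ℝ) : betaDist a b = betaMeasure a b := by
  unfold betaDist betaMeasure
  congr 1 with x
  rw [betaPDF_eq, beta, one_div, inv_div]

lemma betaPDF_eq_zero_of_notMem {a b x : ℝ} (hx : x ∉ Ioo 0 1) : betaPDF a b x = 0 := by
  rw [betaPDF_eq, if_neg (show ¬(0 < x ∧ x < 1) from hx), ENNReal.ofReal_zero]

lemma betaPDFReal_nonneg {a b : ℝ} (ha : 0 < a) (hb : 0 < b) (x : ℝ) :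
    0 ≤ betaPDFReal a b x := by
  by_cases hx : 0 < x ∧ x < 1
  · exact (betaPDFReal_pos hx.1 hx.2 ha hb).le
  · rw [betaPDFReal, if_neg hx]

lemma log_betaPDFReal {a b x : ℝ} (ha : 0 < a) (hb : 0 < b) (hx₀ : 0 < x) (hx₁ : x < 1) :
    Real.log (betaPDFReal a b x)
      = (a - 1) * Real.log x + (b - 1) * Real.log (1 - x) - Real.log (beta a b) := by
  have hβ := beta_pos ha hb
  have hx : 0 < 1 - x := by linarith
  rw [betaPDFReal, if_pos ⟨hx₀, hx₁⟩, Real.log_mul (by positivity) (by positivity),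
    Real.log_mul (by positivity) (by positivity), Real.log_rpow hx₀, Real.log_rpow hx,
    one_div, Real.log_inv]
  ring

namespace InverseBetaModel

def unitCube : Set (ℝ × ℝ × ℝ) := Ioo 0 1 ×ˢ Ioo 0 1 ×ˢ Ioo 0 1

lemma measurableSet_unitCube : MeasurableSet unitCube :=
  measurableSet_Ioo.prod (measurableSet_Ioo.prod measurableSet_Ioo)

lemma mem_unitCube {x y z : ℝ} :
    (x, y, z) ∈ unitCube ↔ (0 < x ∧ x < 1) ∧ (0 < y ∧ y < 1) ∧ (0 < z ∧ z < 1) := by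
  simp [unitCube]

lemma prod_betaMeasure_eq_withDensity (a₁ b₁ a₂ b₂ a₃ b₃ : ℝ) :
    (betaMeasure a₁ b₁).prod ((betaMeasure a₂ b₂).prod (betaMeasure a₃ b₃))
      = (volume.restrict unitCube).withDensity
          fun p => betaPDF a₁ b₁ p.1 * (betaPDF a₂ b₂ p.2.1 * betaPDF a₃ b₃ p.2.2) := by
  have hvol : (volume : Measure (ℝ × ℝ × ℝ)) = volume.prod (volume.prod volume) := by
    rw [Measure.volume_eq_prod, Measure.volume_eq_prod]
  have hpdf (a b : ℝ) : Measurable (betaPDF a b) := by unfold betaPDF; fun_prop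
  rw [← withDensity_indicator measurableSet_unitCube, betaMeasure, betaMeasure, betaMeasure,
    prod_withDensity (hpdf _ _) (hpdf _ _), prod_withDensity (hpdf _ _) (by fun_prop), ← hvol]
  congr 1 with p
  symm
  refine indicator_apply_eq_self.2 fun hp => ?_
  simp only [unitCube, mem_prod, not_and_or] at hp
  rcases hp with h | h | h <;> simp [betaPDF_eq_zero_of_notMem h]

noncomputable def cubeDensity (a₁ a₂ b : ℝ) (p : ℝ × ℝ × ℝ) : ℝ≥0∞ :=
  betaPDF a₁ b p.1 * (betaPDF a₂ (a₁ + b) p.2.1 * betaPDF (a₁ + a₂) b p.2.2)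

lemma map_eq_withDensity_cubeDensity {Ω : Type*} [MeasurableSpace Ω] {μ : Measure Ω}
    [IsProbabilityMeasure μ] {X₁ X₂ X₃ : Ω → ℝ} (h : iIndepFun ![X₁, X₂, X₃] μ)
    (hX₁ : Measurable X₁) (hX₂ : Measurable X₂) (hX₃ : Measurable X₃) {a₁ a₂ b : ℝ}
    (h₁ : μ.map X₁ = betaMeasure a₁ b) (h₂ : μ.map X₂ = betaMeasure a₂ (a₁ + b))
    (h₃ : μ.map X₃ = betaMeasure (a₁ + a₂) b) :
    μ.map (fun ω => (X₁ ω, X₂ ω, X₃ ω))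
      = (volume.restrict unitCube).withDensity (cubeDensity a₁ a₂ b) := by
  rw [h.map_prodMk_prodMk_eq_prod hX₁ hX₂ hX₃, h₁, h₂, h₃, prod_betaMeasure_eq_withDensity]
  rfl

noncomputable def involution (p : ℝ × ℝ × ℝ) : ℝ × ℝ × ℝ :=
  (p.1 * p.2.2 * (1 - p.2.1) / (p.1 * (1 - p.2.1) + p.2.1 * (1 - p.2.2)),
   p.2.1 * p.2.2 / (1 - (1 - p.1) * (1 - p.2.1)),
   1 - (1 - p.1) * (1 - p.2.1))

lemma involution_mk (x y z : ℝ) : involution (x, y, z) =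
    (x * z * (1 - y) / (x * (1 - y) + y * (1 - z)), y * z / (1 - (1 - x) * (1 - y)),
      1 - (1 - x) * (1 - y)) := rfl

lemma measurable_involution : Measurable involution := by
  unfold involution; fun_prop

lemma mapsTo_involution : MapsTo involution unitCube unitCube := by
  rintro ⟨x, y, z⟩ hp
  obtain ⟨⟨hx₀, hx₁⟩, ⟨hy₀, hy₁⟩, hz₀, hz₁⟩ := mem_unitCube.1 hp
  have hD : 0 < x * (1 - y) + y * (1 - z) := by nlinarith
  have hE : 0 < 1 - (1 - x) * (1 - y) := by nlinarith
  rw [involution_mk, mem_unitCube]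
  refine ⟨⟨by positivity, ?_⟩, ⟨by positivity, ?_⟩, hE, by nlinarith⟩
  · rw [div_lt_one hD]; nlinarith
  · rw [div_lt_one hE]; nlinarith

lemma involution_involution {p : ℝ × ℝ × ℝ} (hp : p ∈ unitCube) :
    involution (involution p) = p := by
  obtain ⟨x, y, z⟩ := p
  obtain ⟨⟨hx₀, hx₁⟩, ⟨hy₀, hy₁⟩, hz₀, hz₁⟩ := mem_unitCube.1 hp
  have hy : 1 - y ≠ 0 := by linarith
  set D := x * (1 - y) + y * (1 - z) with hD
  set E := 1 - (1 - x) * (1 - y) with hE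
  have hD₀ : D ≠ 0 := by nlinarith
  have hE₀ : E ≠ 0 := by nlinarith
  have hφ : involution (x, y, z) = (x * z * (1 - y) / D, y * z / E, E) := rfl
  clear_value D E
  have hE' : 1 - (1 - x * z * (1 - y) / D) * (1 - y * z / E) = z := by
    field_simp; rw [hD, hE]; ring
  have hD' : x * z * (1 - y) / D * (1 - y * z / E) + y * z / E * (1 - E) = z * (1 - y) := by
    field_simp; rw [hD, hE]; ring
  rw [hφ, involution_mk, hE', hD']
  refine Prod.ext ?_ (Prod.ext ?_ rfl) <;> dsimp only <;> field_simp
  rw [hD, hE]; ring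

lemma bijOn_involution : BijOn involution unitCube unitCube :=
  InvOn.bijOn ⟨fun _ hp => involution_involution hp, fun _ hp => involution_involution hp⟩
    mapsTo_involution mapsTo_involution

@[simps]
def tripleEquiv : (ℝ × ℝ × ℝ) ≃ₗ[ℝ] (Fin 3 → ℝ) where
  toFun p := ![p.1, p.2.1, p.2.2]
  invFun v := (v 0, v 1, v 2)
  map_add' p q := by ext i; fin_cases i <;> rfl
  map_smul' c p := by ext i; fin_cases i <;> rfl
  left_inv p := rfl
  right_inv v := by ext i; fin_cases i <;> rfl

noncomputable def tripleBasis : Module.Basis (Fin 3) ℝ (ℝ × ℝ × ℝ) :=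
  Module.Basis.ofEquivFun tripleEquiv

lemma toLin_tripleBasis_apply (M : Matrix (Fin 3) (Fin 3) ℝ) (v : ℝ × ℝ × ℝ) :
    Matrix.toLin tripleBasis tripleBasis M v =
      (M 0 0 * v.1 + M 0 1 * v.2.1 + M 0 2 * v.2.2,
       M 1 0 * v.1 + M 1 1 * v.2.1 + M 1 2 * v.2.2,
       M 2 0 * v.1 + M 2 1 * v.2.1 + M 2 2 * v.2.2) := by
  simp [Matrix.toLin_apply, Matrix.mulVec, dotProduct, Fin.sum_univ_three, tripleBasis]

noncomputable def jacobian (p : ℝ × ℝ × ℝ) : Matrix (Fin 3) (Fin 3) ℝ :=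
  let x := p.1; let y := p.2.1; let z := p.2.2
  let D := x * (1 - y) + y * (1 - z); let E := 1 - (1 - x) * (1 - y)
  !![y * z * (1 - y) * (1 - z) / D ^ 2, -(x * z * (1 - z)) / D ^ 2, x * (1 - y) * E / D ^ 2;
     -(y * z * (1 - y)) / E ^ 2, x * z / E ^ 2, y / E;
     1 - y, 1 - x, 0]

noncomputable def fderivInvolution (p : ℝ × ℝ × ℝ) : (ℝ × ℝ × ℝ) →L[ℝ] ℝ × ℝ × ℝ :=
  LinearMap.toContinuousLinearMap (Matrix.toLin tripleBasis tripleBasis (jacobian p))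

lemma hasFDerivAt_involution {x y z : ℝ} (hD : x * (1 - y) + y * (1 - z) ≠ 0)
    (hE : 1 - (1 - x) * (1 - y) ≠ 0) :
    HasFDerivAt involution (fderivInvolution (x, y, z)) (x, y, z) := by
  have hx := hasFDerivAt_fst (𝕜 := ℝ) (p := (x, y, z))
  have hy := (hasFDerivAt_snd (𝕜 := ℝ) (p := (x, y, z))).fst
  have hz := (hasFDerivAt_snd (𝕜 := ℝ) (p := (x, y, z))).snd
  have h1 := hasFDerivAt_const (𝕜 := ℝ) (1 : ℝ) (x, y, z)
  have hE' := h1.sub ((h1.sub hx).mul (h1.sub hy))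
  have hD' := (hx.mul (h1.sub hy)).add (hy.mul (h1.sub hz))
  have h := (((hx.mul hz).mul (h1.sub hy)).mul
      ((hasDerivAt_inv hD).comp_hasFDerivAt (x, y, z) hD')).prodMk
    (((hy.mul hz).mul ((hasDerivAt_inv hE).comp_hasFDerivAt (x, y, z) hE')).prodMk hE')
  refine (h.congr_fderiv ?_).congr_of_eventuallyEq (Filter.Eventually.of_forall fun q => ?_)
  · refine ContinuousLinearMap.ext fun v => ?_
    simp only [fderivInvolution, LinearMap.coe_toContinuousLinearMap', toLin_tripleBasis_apply]
    simp [jacobian]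
    generalize hD' : x * (1 - y) + y * (1 - z) = D at *
    generalize hE' : 1 - (1 - x) * (1 - y) = E at *
    constructor <;> field_simp <;> subst hD' hE' <;> ring
  · simp [involution, div_eq_mul_inv]

lemma det_fderivInvolution {x y z : ℝ} (hD : x * (1 - y) + y * (1 - z) ≠ 0)
    (hE : 1 - (1 - x) * (1 - y) ≠ 0) :
    (fderivInvolution (x, y, z)).det = -(z * (1 - y) / (x * (1 - y) + y * (1 - z))) := by
  rw [fderivInvolution, ContinuousLinearMap.det, LinearMap.coe_toContinuousLinearMap,
    LinearMap.det_toLin, Matrix.det_fin_three]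
  simp only [jacobian, Matrix.of_apply, Matrix.cons_val', Matrix.cons_val_zero,
    Matrix.cons_val_one, Matrix.cons_val_two, Matrix.head_cons, Matrix.tail_cons,
    Matrix.empty_val', Matrix.cons_val_fin_one, Matrix.head_fin_const]
  generalize hD' : x * (1 - y) + y * (1 - z) = D at *
  generalize hE' : 1 - (1 - x) * (1 - y) = E at *
  field_simp
  subst hD' hE'
  ring

lemma jacobian_mul_betaPDFReal_involution {a₁ a₂ b x y z : ℝ} (h₁ : 0 < a₁) (h₂ : 0 < a₂)
    (hb : 0 < b) (hx₀ : 0 < x) (hx₁ : x < 1) (hy₀ : 0 < y) (hy₁ : y < 1) (hz₀ : 0 < z)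
    (hz₁ : z < 1) :
    z * (1 - y) / (x * (1 - y) + y * (1 - z)) *
        (betaPDFReal a₁ b (x * z * (1 - y) / (x * (1 - y) + y * (1 - z))) *
          (betaPDFReal a₂ (a₁ + b) (y * z / (1 - (1 - x) * (1 - y))) *
            betaPDFReal (a₁ + a₂) b (1 - (1 - x) * (1 - y))))
      = betaPDFReal a₁ b x * (betaPDFReal a₂ (a₁ + b) y * betaPDFReal (a₁ + a₂) b z) := by
  have hu := mapsTo_involution (mem_unitCube.2 ⟨⟨hx₀, hx₁⟩, ⟨hy₀, hy₁⟩, hz₀, hz₁⟩)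
  rw [involution_mk, mem_unitCube] at hu
  obtain ⟨⟨hu₀, hu₁⟩, ⟨hv₀, hv₁⟩, hw₀, hw₁⟩ := hu
  set D := x * (1 - y) + y * (1 - z) with hD
  set E := 1 - (1 - x) * (1 - y) with hE
  have hD₀ : 0 < D := by nlinarith
  have hE₀ : 0 < E := by nlinarith
  have hx : 0 < 1 - x := by linarith
  have hy : 0 < 1 - y := by linarith
  have hz : 0 < 1 - z := by linarith
  have hab : 0 < a₁ + b := by linarith
  have haa : 0 < a₁ + a₂ := by linarith
  have := betaPDFReal_pos hu₀ hu₁ h₁ hb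
  have := betaPDFReal_pos hv₀ hv₁ h₂ hab
  have := betaPDFReal_pos hw₀ hw₁ haa hb
  have := betaPDFReal_pos hx₀ hx₁ h₁ hb
  have := betaPDFReal_pos hy₀ hy₁ h₂ hab
  have := betaPDFReal_pos hz₀ hz₁ haa hb
  -- both sides are products of powers of `x, y, z, 1 - x, 1 - y, 1 - z, D, E`: compare logarithms
  refine Real.log_injOn_pos (mem_Ioi.2 (by positivity)) (mem_Ioi.2 (by positivity)) ?_
  have h1u : 1 - x * z * (1 - y) / D = (1 - z) * E / D := by
    field_simp; rw [hD, hE]; ring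
  have h1v : 1 - y * z / E = D / E := by
    field_simp; rw [hD, hE]; ring
  have h1w : 1 - E = (1 - x) * (1 - y) := by rw [hE]; ring
  rw [Real.log_mul (by positivity) (by positivity), Real.log_mul (by positivity) (by positivity),
    Real.log_mul (by positivity) (by positivity), Real.log_mul (by positivity) (by positivity),
    Real.log_mul (by positivity) (by positivity), log_betaPDFReal h₁ hb hu₀ hu₁,
    log_betaPDFReal h₂ hab hv₀ hv₁, log_betaPDFReal haa hb hw₀ hw₁,
    log_betaPDFReal h₁ hb hx₀ hx₁, log_betaPDFReal h₂ hab hy₀ hy₁,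
    log_betaPDFReal haa hb hz₀ hz₁, h1u, h1v, h1w]
  rw [Real.log_div (by positivity) hD₀.ne', Real.log_mul hz₀.ne' hy.ne',
    Real.log_div (by positivity) hD₀.ne', Real.log_mul (by positivity) hy.ne',
    Real.log_mul hx₀.ne' hz₀.ne', Real.log_div (by positivity) hD₀.ne',
    Real.log_mul hz.ne' hE₀.ne', Real.log_div (by positivity) hE₀.ne',
    Real.log_mul hy₀.ne' hz₀.ne', Real.log_div hD₀.ne' hE₀.ne', Real.log_mul hx.ne' hy.ne']
  ring

lemma abs_det_mul_cubeDensity_involution {a₁ a₂ b : ℝ} (h₁ : 0 < a₁) (h₂ : 0 < a₂) (hb : 0 < b)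
    {p : ℝ × ℝ × ℝ} (hp : p ∈ unitCube) :
    ENNReal.ofReal |(fderivInvolution p).det| * cubeDensity a₁ a₂ b (involution p)
      = cubeDensity a₁ a₂ b p := by
  obtain ⟨x, y, z⟩ := p
  obtain ⟨⟨hx₀, hx₁⟩, ⟨hy₀, hy₁⟩, hz₀, hz₁⟩ := mem_unitCube.1 hp
  have hD : 0 < x * (1 - y) + y * (1 - z) := by nlinarith
  have hE : 0 < 1 - (1 - x) * (1 - y) := by nlinarith
  have hy : 0 < 1 - y := by linarith
  have hab : 0 < a₁ + b := by linarith
  rw [det_fderivInvolution hD.ne' hE.ne', abs_neg, abs_of_pos (by positivity), cubeDensity,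
    cubeDensity, involution_mk]
  simp only [betaPDF]
  rw [← ENNReal.ofReal_mul (betaPDFReal_nonneg h₂ hab _),
    ← ENNReal.ofReal_mul (betaPDFReal_nonneg h₁ hb _), ← ENNReal.ofReal_mul (by positivity),
    ← ENNReal.ofReal_mul (betaPDFReal_nonneg h₂ hab _),
    ← ENNReal.ofReal_mul (betaPDFReal_nonneg h₁ hb _),
    jacobian_mul_betaPDFReal_involution h₁ h₂ hb hx₀ hx₁ hy₀ hy₁ hz₀ hz₁]

lemma map_involution_withDensity_cubeDensity {a₁ a₂ b : ℝ} (h₁ : 0 < a₁) (h₂ : 0 < a₂)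
    (hb : 0 < b) :
    ((volume.restrict unitCube).withDensity (cubeDensity a₁ a₂ b)).map involution
      = (volume.restrict unitCube).withDensity (cubeDensity a₁ a₂ b) := by
  have : (volume : Measure (ℝ × ℝ × ℝ)).IsAddHaarMeasure := Measure.prod.instIsAddHaarMeasure _ _
  refine map_restrict_withDensity_eq_self volume measurableSet_unitCube ?_ bijOn_involution
    measurable_involution fun p hp => abs_det_mul_cubeDensity_involution h₁ h₂ hb hp
  rintro ⟨x, y, z⟩ hp
  obtain ⟨⟨hx₀, hx₁⟩, ⟨hy₀, hy₁⟩, hz₀, hz₁⟩ := mem_unitCube.1 hp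
  exact (hasFDerivAt_involution (by nlinarith) (by nlinarith)).hasFDerivWithinAt

/-- The map `T^{h,Y}` of the paper. -/
noncomputable def transform (h : ℝ → ℝ) (y : ℝ) (r : ℝ × ℝ) : ℝ × ℝ :=
  (y + h y * r.1 / r.2, y * r.2 / r.1 + h y)

noncomputable def fromCube (p : ℝ × ℝ × ℝ) : ℝ × ℝ := (p.1⁻¹, p.2.1⁻¹ - 1)

lemma fromCube_involution {p : ℝ × ℝ × ℝ} (hp : p ∈ unitCube) :
    fromCube (involution p) = transform (· - 1) p.2.2⁻¹ (fromCube p) := by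
  obtain ⟨x, y, z⟩ := p
  obtain ⟨⟨hx₀, hx₁⟩, ⟨hy₀, hy₁⟩, hz₀, hz₁⟩ := mem_unitCube.1 hp
  have hD : x * (1 - y) + y * (1 - z) ≠ 0 := by nlinarith
  have hE : 1 - (1 - x) * (1 - y) ≠ 0 := by nlinarith
  have hy : 1 - y ≠ 0 := by linarith
  rw [fromCube, fromCube, involution_mk, transform]
  refine Prod.ext ?_ ?_ <;> dsimp only <;> field_simp
  ring

end InverseBetaModel

open InverseBetaModel in
/-- invariance of the inverse-beta model. If `R¹, R², Y` are
independent with `R¹ ~ Be⁻¹(μ-λ,β)`, `R²+1 ~ Be⁻¹(λ,β+μ-λ)`, `Y ~ Be⁻¹(μ,β)`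
(`μ > λ > 0`, `β > 0`), then `(Y + (Y-1)·R¹/R², Y·R²/R¹ + (Y-1)) =ᵈ (R¹, R²)`. -/
theorem stmt_13 {Ω : Type*} [MeasurableSpace Ω] (μ : Measure Ω) [IsProbabilityMeasure μ]
    (R1 R2 Y : Ω → ℝ) (hR1 : Measurable R1) (hR2 : Measurable R2) (hY : Measurable Y)
    (hind : iIndepFun ![R1, R2, Y] μ)
    (m l b : ℝ) (hl : 0 < l) (hml : l < m) (hb : 0 < b)
    (hR1d : μ.map (fun ω => (R1 ω)⁻¹) = betaDist (m - l) b)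
    (hR2d : μ.map (fun ω => (R2 ω + 1)⁻¹) = betaDist l (b + m - l))
    (hYd : μ.map (fun ω => (Y ω)⁻¹) = betaDist m b) :
    μ.map (fun ω => (Y ω + (Y ω - 1) * R1 ω / R2 ω, Y ω * R2 ω / R1 ω + (Y ω - 1)))
      = μ.map (fun ω => (R1 ω, R2 ω)) := by
  set X : Ω → ℝ × ℝ × ℝ := fun ω => ((R1 ω)⁻¹, (R2 ω + 1)⁻¹, (Y ω)⁻¹)
  set ν := (volume.restrict unitCube).withDensity (cubeDensity (m - l) l b)
  have hX : Measurable X := by fun_prop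
  have hindX : iIndepFun ![fun ω => (R1 ω)⁻¹, fun ω => (R2 ω + 1)⁻¹, fun ω => (Y ω)⁻¹] μ := by
    convert hind.comp ![fun r => r⁻¹, fun r => (r + 1)⁻¹, fun r => r⁻¹]
      (by intro i; fin_cases i <;> dsimp <;> fun_prop) using 1
    funext i; fin_cases i <;> rfl
  have hlaw : μ.map X = ν := by
    refine map_eq_withDensity_cubeDensity hindX (by fun_prop) (by fun_prop) (by fun_prop) ?_ ?_ ?_
    · rw [hR1d, betaDist_eq_betaMeasure]
    · rw [hR2d, betaDist_eq_betaMeasure]; congr 1; ring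
    · rw [hYd, betaDist_eq_betaMeasure, sub_add_cancel]
  have hcube : ∀ᵐ p ∂ν, p ∈ unitCube :=
    (withDensity_absolutelyContinuous _ _).ae_le (ae_restrict_mem measurableSet_unitCube)
  have hfromCube : Measurable fromCube := by unfold fromCube; fun_prop
  calc μ.map (fun ω => transform (· - 1) (Y ω) (R1 ω, R2 ω))
      = ν.map (fun p => transform (· - 1) p.2.2⁻¹ (fromCube p)) := by
        rw [← hlaw, Measure.map_map (by unfold transform fromCube; fun_prop) hX]
        congr 1 with ω <;> simp [X, fromCube]
    _ = (ν.map involution).map fromCube := by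
        rw [Measure.map_map hfromCube measurable_involution]
        exact Measure.map_congr (hcube.mono fun p hp => (fromCube_involution hp).symm)
    _ = μ.map (fun ω => (R1 ω, R2 ω)) := by
        rw [show ν.map involution = ν from map_involution_withDensity_cubeDensity
          (by linarith) hl hb, ← hlaw, Measure.map_map hfromCube hX]
        congr 1 with ω <;> simp [X, fromCube]
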